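/- Let A be a finite-dimensional unital associative algebra over a field k, let t : A → k be a symmetric linear form which is non-degenerate (i.e. if t(xy) = 0 for all y ∈ A then x = 0), and let {t_P} be the unique family of trace maps on the finitely generated projective left A-modules with t_A(r_x) = t(x) for all x ∈ A. Then for every finitely generated projective left A-module P and every finite-dimensional left A-module M, the bilinear pairing Hom_A(M,P) × Hom_A(P,M) → k, (f,g) ↦ t_P(f∘g), is non-degenerate. -/
import Mathlib

open scoped TensorProduct

/-- Right multiplication by `x` as an endomorphism of the left regular module. -/
def rmul (A : Type) [Ring A] (x : A) : A →ₗ[A] A where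
  toFun a := a * x
  map_add' a b := add_mul a b x
  map_smul' c a := by simp [smul_eq_mul, mul_assoc]

/-- A family of trace maps on the finitely generated projective left `A`-modules:
a `k`-linear map `End_A(P) → k` for each such `P`, satisfying cyclicity. -/
structure TraceFamily (k A : Type) [Field k] [Ring A] [Algebra k A] : Type 1 where
  tr : ∀ (P : Type) [iAdd : AddCommGroup P] [iK : Module k P] [iA : Module A P]
      [iT : IsScalarTower k A P] [iF : Module.Finite A P] [iP : Module.Projective A P],
      (P →ₗ[A] P) → k
  tr_add : ∀ (P : Type) [AddCommGroup P] [Module k P] [Module A P]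
      [IsScalarTower k A P] [Module.Finite A P] [Module.Projective A P]
      (f g : P →ₗ[A] P), tr P (f + g) = tr P f + tr P g
  tr_smul : ∀ (P : Type) [AddCommGroup P] [Module k P] [Module A P]
      [IsScalarTower k A P] [Module.Finite A P] [Module.Projective A P]
      (c : k) (f : P →ₗ[A] P), tr P (c • f) = c * tr P f
  tr_cyclic : ∀ (P P' : Type) [AddCommGroup P] [Module k P] [Module A P]
      [IsScalarTower k A P] [Module.Finite A P] [Module.Projective A P]
      [AddCommGroup P'] [Module k P'] [Module A P']
      [IsScalarTower k A P'] [Module.Finite A P'] [Module.Projective A P']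
      (f : P →ₗ[A] P') (g : P' →ₗ[A] P), tr P (g ∘ₗ f) = tr P' (f ∘ₗ g)

section Aux

variable (k A : Type) [Field k] [Ring A] [Algebra k A]

/-- `a ↦ a • m` as a `k`-linear map. -/
def smulLin (M : Type) [AddCommGroup M] [Module k M] [Module A M] [IsScalarTower k A M]
    (m : M) : A →ₗ[k] M where
  toFun a := a • m
  map_add' a b := add_smul a b m
  map_smul' c a := smul_assoc c a m

/-- `a ↦ a • m` as an `A`-linear map. -/
def smulA (M : Type) [AddCommGroup M] [Module A M] (m : M) : A →ₗ[A] M where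
  toFun a := a • m
  map_add' a b := add_smul a b m
  map_smul' c a := mul_smul c a m

lemma endo_eq_rmul (e : A →ₗ[A] A) : e = rmul A (e 1) := by
  ext
  simp [rmul]

/-- The map `x ↦ (y ↦ t (y * x))` from `A` to its `k`-dual. -/
def tauMap (t : A →ₗ[k] k) : A →ₗ[k] Module.Dual k A where
  toFun x := t ∘ₗ smulLin k A A x
  map_add' x y := by ext a; simp [smulLin, smul_eq_mul, mul_add]
  map_smul' c x := by ext a; simp [smulLin, smul_comm a c x]

@[simp] lemma tauMap_apply (t : A →ₗ[k] k) (x y : A) : tauMap k A t x y = t (y * x) := by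
  simp [tauMap, smulLin, smul_eq_mul]

/-- Frobenius property: every `k`-linear functional on an `A`-module lifts through `t`. -/
lemma exists_dual_lift [Module.Finite k A] (t : A →ₗ[k] k)
    (ht : ∀ x y : A, t (x * y) = t (y * x))
    (htnd : ∀ x : A, (∀ y : A, t (x * y) = 0) → x = 0)
    (M : Type) [AddCommGroup M] [Module k M] [Module A M] [IsScalarTower k A M]
    (φ : M →ₗ[k] k) : ∃ f : M →ₗ[A] A, ∀ m : M, t (f m) = φ m := by
  have hinj : Function.Injective (tauMap k A t) := by
    rw [injective_iff_map_eq_zero]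
    intro x hx
    refine htnd x fun y => ?_
    rw [ht]
    have := congrArg (fun (ψ : Module.Dual k A) => ψ y) hx
    simpa using this
  have hdim : Module.finrank k A = Module.finrank k (Module.Dual k A) :=
    (Subspace.dual_finrank_eq).symm
  have hsurj : Function.Surjective (tauMap k A t) :=
    (LinearMap.injective_iff_surjective_of_finrank_eq_finrank hdim).mp hinj
  let e : A ≃ₗ[k] Module.Dual k A := LinearEquiv.ofBijective (tauMap k A t) ⟨hinj, hsurj⟩
  have he : ∀ x : A, e x = tauMap k A t x := fun _ => rfl
  -- ψ m : a ↦ φ (a • m)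
  let ψ : M → Module.Dual k A := fun m => φ ∘ₗ smulLin k A M m
  have hψ : ∀ m a, ψ m a = φ (a • m) := fun _ _ => rfl
  refine ⟨{ toFun := fun m => e.symm (ψ m)
            map_add' := ?_
            map_smul' := ?_ }, ?_⟩
  · intro m m'
    have h : ψ (m + m') = ψ m + ψ m' := by
      ext a
      simp only [LinearMap.add_apply, hψ, smul_add, map_add]
    show e.symm (ψ (m + m')) = e.symm (ψ m) + e.symm (ψ m')
    rw [h, map_add]
  · intro b m
    show e.symm (ψ (b • m)) = b • e.symm (ψ m)
    rw [LinearEquiv.symm_apply_eq]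
    ext a
    calc ψ (b • m) a = φ ((a * b) • m) := by rw [hψ, mul_smul]
      _ = ψ m (a * b) := (hψ m (a * b)).symm
      _ = tauMap k A t (e.symm (ψ m)) (a * b) := by rw [← he, e.apply_symm_apply]
      _ = t (a * (b * e.symm (ψ m))) := by rw [tauMap_apply, mul_assoc]
      _ = tauMap k A t (b * e.symm (ψ m)) a := (tauMap_apply k A t _ a).symm
      _ = e (b • e.symm (ψ m)) a := by rw [he, smul_eq_mul]
  · intro m
    show t (e.symm (ψ m)) = φ m
    have h1 : tauMap k A t (e.symm (ψ m)) = ψ m := by rw [← he, e.apply_symm_apply]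
    have h2 := congrArg (fun (χ : Module.Dual k A) => χ 1) h1
    simpa [hψ, one_smul] using h2

end Aux

theorem stmt2 (k A : Type) [Field k] [Ring A] [Algebra k A] [Module.Finite k A]
    (t : A →ₗ[k] k) (ht : ∀ x y : A, t (x * y) = t (y * x))
    (htnd : ∀ x : A, (∀ y : A, t (x * y) = 0) → x = 0)
    (T : TraceFamily k A) (hT : ∀ x : A, T.tr A (rmul A x) = t x) :
    ∀ (P : Type) [AddCommGroup P] [Module k P] [Module A P]
      [IsScalarTower k A P] [Module.Finite A P] [Module.Projective A P]
      (M : Type) [AddCommGroup M] [Module k M] [Module A M]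
      [IsScalarTower k A M] [Module.Finite k M],
      (∀ f : M →ₗ[A] P, (∀ g : P →ₗ[A] M, T.tr P (f ∘ₗ g) = 0) → f = 0) ∧
      (∀ g : P →ₗ[A] M, (∀ f : M →ₗ[A] P, T.tr P (f ∘ₗ g) = 0) → g = 0) := by
  intro P _ _ _ _ _ _ M _ _ _ _ _
  obtain ⟨n, p, hp⟩ := Module.Finite.exists_fin' A P
  obtain ⟨i, hi⟩ := Module.projective_lifting_property p (LinearMap.id) hp
  have hpi : ∀ x : P, p (i x) = x := fun x => LinearMap.congr_fun hi x
  constructor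
  · -- f ↦ (g ↦ tr (f ∘ g)) is injective
    intro f hf
    have key : ∀ (j : Fin n) (m : M), (LinearMap.proj j ∘ₗ (i ∘ₗ f)) m = 0 := by
      intro j m
      refine htnd _ fun a => ?_
      rw [← ht]
      -- use g := (x ↦ x • (a • m)) ∘ proj j ∘ i
      have h0 := hf ((smulA A M (a • m)) ∘ₗ (LinearMap.proj j ∘ₗ i))
      have c1 := T.tr_cyclic P (Fin n → A) i
        ((f ∘ₗ smulA A M (a • m)) ∘ₗ LinearMap.proj (R := A) (φ := fun _ : Fin n => A) j)
      have c2 := T.tr_cyclic (Fin n → A) A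
        (LinearMap.proj (R := A) (φ := fun _ : Fin n => A) j)
        ((i ∘ₗ (f ∘ₗ smulA A M (a • m))))
      have e1 : T.tr P (f ∘ₗ ((smulA A M (a • m)) ∘ₗ (LinearMap.proj j ∘ₗ i)))
          = T.tr A ((LinearMap.proj (R := A) (φ := fun _ : Fin n => A) j)
              ∘ₗ (i ∘ₗ (f ∘ₗ smulA A M (a • m)))) := by
        exact c1.trans c2
      have e2 : T.tr A ((LinearMap.proj (R := A) (φ := fun _ : Fin n => A) j)
              ∘ₗ (i ∘ₗ (f ∘ₗ smulA A M (a • m))))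
          = t ((LinearMap.proj j ∘ₗ (i ∘ₗ f)) (a • m)) := by
        rw [endo_eq_rmul A ((LinearMap.proj (R := A) (φ := fun _ : Fin n => A) j)
              ∘ₗ (i ∘ₗ (f ∘ₗ smulA A M (a • m)))), hT]
        congr 1
        show (LinearMap.proj (R := A) (φ := fun _ : Fin n => A) j) (i (f ((1 : A) • (a • m)))) = _
        rw [one_smul]
        rfl
      have : t ((LinearMap.proj j ∘ₗ (i ∘ₗ f)) (a • m)) = 0 := by
        rw [← e2, ← e1]; exact h0
      rw [map_smul, smul_eq_mul] at this
      exact this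
    have hif : ∀ m : M, i (f m) = 0 := by
      intro m
      funext j
      exact key j m
    ext m
    have : f m = p (i (f m)) := (hpi (f m)).symm
    rw [this, hif m, map_zero]
    rfl
  · -- g ↦ (f ↦ tr (f ∘ g)) is injective
    intro g hg
    have key : ∀ j : Fin n, g (p (Pi.single j (1 : A))) = 0 := by
      intro j
      rw [← Module.forall_dual_apply_eq_zero_iff k]
      intro φ
      obtain ⟨fφ, hfφ⟩ := exists_dual_lift k A t ht htnd M φ
      have h0 := hg ((p ∘ₗ LinearMap.single A (fun _ : Fin n => A) j) ∘ₗ fφ)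
      have c1 := T.tr_cyclic P (Fin n → A)
        ((LinearMap.single A (fun _ : Fin n => A) j ∘ₗ fφ) ∘ₗ g) p
      have c2 := T.tr_cyclic A (Fin n → A)
        (LinearMap.single A (fun _ : Fin n => A) j)
        ((fφ ∘ₗ g) ∘ₗ p)
      have e1 : T.tr P (((p ∘ₗ LinearMap.single A (fun _ : Fin n => A) j) ∘ₗ fφ) ∘ₗ g)
          = T.tr A (((fφ ∘ₗ g) ∘ₗ p) ∘ₗ LinearMap.single A (fun _ : Fin n => A) j) := by
        exact c1.trans c2.symm
      have e2 : T.tr A (((fφ ∘ₗ g) ∘ₗ p) ∘ₗ LinearMap.single A (fun _ : Fin n => A) j)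
          = t (fφ (g (p (Pi.single j (1 : A))))) := by
        rw [endo_eq_rmul A (((fφ ∘ₗ g) ∘ₗ p) ∘ₗ LinearMap.single A (fun _ : Fin n => A) j), hT]
        congr 1
      have : t (fφ (g (p (Pi.single j (1 : A))))) = 0 := by
        rw [← e2, ← e1]; exact h0
      rw [hfφ] at this
      exact this
    have hsingle : ∀ (j : Fin n) (c : A), (Pi.single j c : Fin n → A) = c • (Pi.single j (1 : A) : Fin n → A) := by
      intro j c
      funext l
      simp [Pi.single_apply, smul_eq_mul, mul_ite]
    ext x
    simp only [LinearMap.zero_apply]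
    have hx : i x = ∑ j, Pi.single j (i x j) := (Finset.univ_sum_single (i x)).symm
    have hgx : g x = g (p (i x)) := by rw [hpi]
    rw [hgx, hx, map_sum, map_sum]
    refine Finset.sum_eq_zero fun j _ => ?_
    rw [hsingle j (i x j), map_smul, map_smul, key j, smul_zero]
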